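/- For every finite simple graph G on n ≥ 1 vertices, the Grundy number satisfies Γ(G) ≤ (4(λ₁(G) + 2))^{2/3} · n^{1/3}, where λ₁(G) is the largest eigenvalue of the adjacency matrix of G. In particular, Γ(G) = O(λ₁(G) · (n/λ₁(G))^{1/3}). -/

import Mathlib

/-!
Let `f` be a first-fit colouring with `k` colours and put `s = ⌊2k/3⌋`. At least `k - s`
vertices get a colour `≥ s`, and each of them has neighbours of all `s` colours below `s`; so
between `S = {f < s}` and `T = {f ≥ s}` there are at least `s |T|` edges. Testing the adjacency
matrix on the vector equal to `√|T|` on `S` and `√|S|` on `T` gives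
`e(S, T) ≤ λ₁ √(|S| |T|)`. Hence `s² |T| ≤ λ₁² n`, and `k³ ≤ 16 s² (k - s) ≤ 16 λ₁² n`.
-/

/-- The first-fit (greedy) coloring of `G` along the vertex ordering `0 < 1 < ⋯`:
each vertex receives the smallest color (a natural number) not used by its
previously colored neighbors. -/
noncomputable def greedyColor {n : ℕ} (G : SimpleGraph (Fin n)) : Fin n → ℕ
  | i => sInf {c : ℕ | ∀ j : Fin n, j < i → G.Adj j i → greedyColor G j ≠ c}
  termination_by i => i.1

/-- The Grundy number of `G`: the largest number of colors used by the
first-fit coloring, over all orderings of the vertices. -/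
noncomputable def grundyNumber {V : Type} [Fintype V] (G : SimpleGraph V) : ℕ :=
  letI := Classical.decEq V
  Finset.univ.sup fun σ : Fin (Fintype.card V) ≃ V =>
    (Finset.univ.image (greedyColor (G.comap σ))).card

open scoped Matrix in
/-- `lambda1 G` : the largest eigenvalue of the adjacency matrix of `G`. -/
noncomputable def lambda1 {V : Type} [Fintype V] (G : SimpleGraph V) : ℝ :=
  letI := Classical.decRel G.Adj
  sSup {x : ℝ | ∃ v : V → ℝ, v ≠ 0 ∧ G.adjMatrix ℝ *ᵥ v = x • v}

open Finset Matrix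

theorem Matrix.IsHermitian.dotProduct_mulVec_le_sSup_spectrum {n : Type*} [Fintype n]
    [DecidableEq n] {A : Matrix n n ℝ} (hA : A.IsHermitian) (v : n → ℝ) :
    v ⬝ᵥ A *ᵥ v ≤ sSup (spectrum ℝ A) * (v ⬝ᵥ v) := by
  set μ := sSup (spectrum ℝ A)
  have hpsd : (algebraMap ℝ _ μ - A).PosSemidef := by
    refine posSemidef_iff_isHermitian_and_spectrum_nonneg.2 ⟨?_, ?_⟩
    · rw [Algebra.algebraMap_eq_smul_one]
      exact (isHermitian_one.smul (IsSelfAdjoint.all μ)).sub hA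
    · rw [← spectrum.singleton_sub_eq]
      rintro _ ⟨_, rfl, x, hx, rfl⟩
      exact sub_nonneg.2 (le_csSup A.finite_real_spectrum.bddAbove hx)
  simpa [sub_mulVec, Algebra.algebraMap_eq_smul_one, smul_mulVec, dotProduct_smul]
    using hpsd.dotProduct_mulVec_nonneg v

theorem Matrix.mem_spectrum_iff_exists_mulVec_eq_smul {K n : Type*} [Field K] [Fintype n]
    [DecidableEq n] {A : Matrix n n K} {μ : K} :
    μ ∈ spectrum K A ↔ ∃ v ≠ 0, A *ᵥ v = μ • v := by
  rw [← spectrum_toLin', ← Module.End.hasEigenvalue_iff_mem_spectrum]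
  constructor
  · intro h
    obtain ⟨v, hv⟩ := h.exists_hasEigenvector
    exact ⟨v, hv.2, hv.apply_eq_smul⟩
  · rintro ⟨v, hv, h⟩
    exact Module.End.hasEigenvalue_of_hasEigenvector ⟨Module.End.mem_eigenspace_iff.2 h, hv⟩

theorem Real.le_rpow_two_thirds_mul_rpow_one_third {x a b : ℝ} (ha : 0 ≤ a) (hb : 0 ≤ b)
    (h : x ^ 3 ≤ a ^ 2 * b) : x ≤ a ^ ((2 : ℝ) / 3) * b ^ ((1 : ℝ) / 3) := by
  have hcube : (a ^ ((2 : ℝ) / 3) * b ^ ((1 : ℝ) / 3)) ^ 3 = a ^ 2 * b := by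
    rw [mul_pow, ← rpow_mul_natCast ha, ← rpow_mul_natCast hb]
    norm_num
  exact le_of_pow_le_pow_left₀ three_ne_zero (by positivity) (hcube ▸ h)

theorem Nat.cube_le_sixteen_mul_sq_mul_sub {k : ℕ} (hk : 2 ≤ k) :
    k ^ 3 ≤ 16 * (2 * k / 3) ^ 2 * (k - 2 * k / 3) := by
  obtain ⟨q, r, hr, rfl⟩ : ∃ q r, r < 3 ∧ k = 3 * q + r :=
    ⟨k / 3, k % 3, Nat.mod_lt _ (by norm_num), (Nat.div_add_mod k 3).symm⟩
  interval_cases r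
  · rw [show 2 * (3 * q + 0) / 3 = 2 * q by omega, show 3 * q + 0 - 2 * q = q by omega]
    nlinarith
  · rw [show 2 * (3 * q + 1) / 3 = 2 * q by omega, show 3 * q + 1 - 2 * q = q + 1 by omega]
    nlinarith
  · rw [show 2 * (3 * q + 2) / 3 = 2 * q + 1 by omega,
      show 3 * q + 2 - (2 * q + 1) = q + 1 by omega]
    nlinarith

theorem Finset.sub_le_card_filter_le {V : Type*} [Fintype V] {f : V → ℕ} {k : ℕ}
    (hk : ∀ t < k, ∃ v, f v = t) (s : ℕ) : k - s ≤ #{v | s ≤ f v} := by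
  refine (Nat.card_Ico s k).symm.le.trans (card_le_card_of_surjOn f fun t ht => ?_)
  obtain ⟨v, rfl⟩ := hk t (mem_Ico.1 ht).2
  exact ⟨v, by simpa using (mem_Ico.1 ht).1, rfl⟩

namespace SimpleGraph

variable {V : Type} (G : SimpleGraph V)

theorem lambda1_eq_sSup_spectrum [Fintype V] [DecidableEq V] [DecidableRel G.Adj] :
    lambda1 G = sSup (spectrum ℝ (G.adjMatrix ℝ)) := by
  rw [lambda1]
  congr 1
  ext x
  rw [Set.mem_ofPred_eq, mem_spectrum_iff_exists_mulVec_eq_smul]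
  congr!

theorem dotProduct_adjMatrix_mulVec_le_lambda1 [Fintype V] [DecidableRel G.Adj] (v : V → ℝ) :
    v ⬝ᵥ G.adjMatrix ℝ *ᵥ v ≤ lambda1 G * (v ⬝ᵥ v) := by
  classical
  rw [lambda1_eq_sSup_spectrum]
  exact IsHermitian.dotProduct_mulVec_le_sSup_spectrum (by simp) v

theorem lambda1_nonneg [Fintype V] : 0 ≤ lambda1 G := by
  classical
  rcases isEmpty_or_nonempty V with _ | ⟨⟨u⟩⟩
  · rw [lambda1_eq_sSup_spectrum]
    simp
  · simpa using G.dotProduct_adjMatrix_mulVec_le_lambda1 (Pi.single u 1)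

theorem card_interedges_comm [DecidableEq V] [DecidableRel G.Adj] (S T : Finset V) :
    #(G.interedges S T) = #(G.interedges T S) :=
  have := G.symm
  Rel.card_interedges_comm S T

theorem card_interedges_eq_sum_card_filter [DecidableEq V] [DecidableRel G.Adj]
    (S T : Finset V) : #(G.interedges S T) = ∑ w ∈ T, #{u ∈ S | G.Adj u w} := by
  simp only [interedges_def, card_filter, sum_product_right]

theorem indicator_dotProduct_adjMatrix_mulVec_indicator [Fintype V] [DecidableEq V]
    [DecidableRel G.Adj] (S T : Finset V) (a b : ℝ) :
    (fun u => if u ∈ S then a else 0) ⬝ᵥ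
        G.adjMatrix ℝ *ᵥ (fun u => if u ∈ T then b else 0) = a * b * #(G.interedges S T) := by
  simp only [interedges_def, card_filter, sum_product, dotProduct, mulVec, adjMatrix_apply,
    ite_mul, zero_mul, one_mul, mul_ite, mul_zero, sum_ite_mem, univ_inter]
  push_cast
  simp only [mul_sum]
  refine sum_congr rfl fun u _ => sum_congr rfl fun w _ => ?_
  split_ifs <;> ring

theorem card_interedges_le_lambda1_mul_sqrt [Fintype V] [DecidableEq V] [DecidableRel G.Adj]
    {S T : Finset V} (hST : Disjoint S T) :
    (#(G.interedges S T) : ℝ) ≤ lambda1 G * √(#S * #T) := by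
  set r := √((#S : ℝ) * #T)
  set x : V → ℝ := fun u => if u ∈ S then √(#T : ℝ) else 0
  set y : V → ℝ := fun u => if u ∈ T then √(#S : ℝ) else 0
  have hr : √(#T : ℝ) * √(#S : ℝ) = r := by rw [← Real.sqrt_mul (by positivity), mul_comm]
  have hr2 : r ^ 2 = #S * #T := Real.sq_sqrt (by positivity)
  have hquad : 2 * r * #(G.interedges S T) ≤ (x + y) ⬝ᵥ G.adjMatrix ℝ *ᵥ (x + y) := by
    simp only [x, y, add_dotProduct, mulVec_add, dotProduct_add,
      indicator_dotProduct_adjMatrix_mulVec_indicator, G.card_interedges_comm T S]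
    rw [← hr]
    nlinarith [mul_self_nonneg √(#T : ℝ), mul_self_nonneg √(#S : ℝ)]
  have hnorm : (x + y) ⬝ᵥ (x + y) = 2 * r ^ 2 := by
    simp [x, y, hr2, dotProduct, sum_add_distrib, add_mul, mul_add, ite_mul, mul_ite,
      sum_ite_mem, disjoint_iff_inter_eq_empty.1 hST, inter_comm T S]
    ring
  have key : r * #(G.interedges S T) ≤ r * (lambda1 G * r) := by
    have := G.dotProduct_adjMatrix_mulVec_le_lambda1 (x + y)
    rw [hnorm] at this
    linarith
  have hr_nonneg : 0 ≤ r := Real.sqrt_nonneg _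
  rcases hr_nonneg.eq_or_lt with hr0 | hr0
  · have : (#(G.interedges S T) : ℝ) ≤ r ^ 2 := by
      rw [hr2]; exact_mod_cast G.card_interedges_le_mul S T
    rw [← hr0] at this ⊢
    simpa using this
  · exact le_of_mul_le_mul_left key hr0

variable {G}

def IsGreedyLabeling (f : V → ℕ) : Prop :=
  ∀ v, ∀ t < f v, ∃ u, G.Adj u v ∧ f u = t

theorem isGreedyLabeling_greedyColor {n : ℕ} (G : SimpleGraph (Fin n)) :
    G.IsGreedyLabeling (greedyColor G) := by
  intro i t ht
  rw [greedyColor] at ht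
  obtain ⟨j, -, hadj, hj⟩ := by simpa using Nat.notMem_of_lt_sInf ht
  exact ⟨j, hadj, hj⟩

theorem IsGreedyLabeling.comp_equiv {W : Type} (σ : W ≃ V) {f : W → ℕ}
    (hf : (G.comap σ).IsGreedyLabeling f) : G.IsGreedyLabeling (f ∘ σ.symm) := by
  intro v t ht
  obtain ⟨u, hadj, rfl⟩ := hf (σ.symm v) t ht
  exact ⟨σ u, by simpa using hadj, by simp⟩

theorem IsGreedyLabeling.exists_eq_of_lt_card_image [Fintype V] [DecidableEq V] {f : V → ℕ}
    (hf : G.IsGreedyLabeling f) {t : ℕ} (ht : t < #(univ.image f)) : ∃ v, f v = t := by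
  by_contra! hne
  have : univ.image f ⊆ range t := by
    simp only [subset_iff, mem_image, mem_univ, true_and, mem_range, forall_exists_index,
      forall_apply_eq_imp_iff]
    intro v
    by_contra! hle
    obtain ⟨u, -, hu⟩ := hf v t (hle.lt_of_ne (hne v).symm)
    exact hne u hu
  simpa using (card_le_card this).trans_lt' ht

theorem IsGreedyLabeling.mul_card_le_card_interedges [Fintype V] [DecidableEq V]
    [DecidableRel G.Adj] {f : V → ℕ} (hf : G.IsGreedyLabeling f) (s : ℕ) :
    s * #{v | s ≤ f v} ≤ #(G.interedges {v | f v < s} {v | s ≤ f v}) := by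
  rw [card_interedges_eq_sum_card_filter, mul_comm, ← smul_eq_mul, ← sum_const]
  refine sum_le_sum fun w hw => ?_
  refine (card_range s).symm.le.trans (card_le_card_of_surjOn f fun t ht => ?_)
  obtain ⟨u, hadj, rfl⟩ := hf w t ((mem_range.1 ht).trans_le (mem_filter.1 hw).2)
  exact ⟨u, by simpa [hadj] using ht, rfl⟩

theorem IsGreedyLabeling.cube_le_lambda1_sq [Fintype V] {f : V → ℕ} (hf : G.IsGreedyLabeling f)
    {k : ℕ} (hk2 : 2 ≤ k) (hk : ∀ t < k, ∃ v, f v = t) :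
    (k : ℝ) ^ 3 ≤ 16 * lambda1 G ^ 2 * Fintype.card V := by
  classical
  set s := 2 * k / 3
  set S : Finset V := {v | f v < s}
  set T : Finset V := {v | s ≤ f v}
  have hT : k - s ≤ #T := sub_le_card_filter_le hk s
  have hT0 : (0 : ℝ) < #T := by exact_mod_cast (show 0 < #T by omega)
  have hsT : (s * #T : ℝ) ≤ #(G.interedges S T) := by
    exact_mod_cast hf.mul_card_le_card_interedges s
  have hspec : (#(G.interedges S T) : ℝ) ≤ lambda1 G * √(#S * #T) :=
    G.card_interedges_le_lambda1_mul_sqrt (disjoint_filter.2 fun v _ h => not_le.2 h)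
  have hS : (#S : ℝ) ≤ Fintype.card V := by exact_mod_cast card_le_univ S
  have hsq : (s : ℝ) ^ 2 * #T ≤ lambda1 G ^ 2 * Fintype.card V := by
    have : ((s : ℝ) * #T) ^ 2 ≤ lambda1 G ^ 2 * (#S * #T) :=
      calc ((s : ℝ) * #T) ^ 2 ≤ (#(G.interedges S T) : ℝ) ^ 2 := by gcongr
        _ ≤ (lambda1 G * √(#S * #T)) ^ 2 := by gcongr
        _ = lambda1 G ^ 2 * (#S * #T) := by rw [mul_pow, Real.sq_sqrt (by positivity)]
    refine le_of_mul_le_mul_right ?_ hT0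
    nlinarith [mul_le_mul_of_nonneg_left hS (mul_nonneg (sq_nonneg (lambda1 G)) hT0.le)]
  calc (k : ℝ) ^ 3 ≤ 16 * (s : ℝ) ^ 2 * ((k - s : ℕ) : ℝ) := by
        exact_mod_cast Nat.cube_le_sixteen_mul_sq_mul_sub hk2
    _ ≤ 16 * (s : ℝ) ^ 2 * #T := by gcongr
    _ ≤ 16 * lambda1 G ^ 2 * Fintype.card V := by linarith

theorem IsGreedyLabeling.card_image_cube_le [Fintype V] [DecidableEq V] {f : V → ℕ}
    (hf : G.IsGreedyLabeling f) :
    (#(univ.image f) : ℝ) ^ 3 ≤ (4 * (lambda1 G + 2)) ^ 2 * Fintype.card V := by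
  have hlam := G.lambda1_nonneg
  rcases lt_or_ge #(univ.image f) 2 with hk | hk
  · have hkn : (#(univ.image f) : ℝ) ≤ Fintype.card V := by
      exact_mod_cast card_image_le.trans_eq card_univ
    have hcube : (#(univ.image f) : ℝ) ^ 3 ≤ #(univ.image f) := by
      interval_cases #(univ.image f) <;> norm_num
    have hone : 1 ≤ (4 * (lambda1 G + 2)) ^ 2 := by nlinarith
    nlinarith [(Fintype.card V).cast_nonneg (α := ℝ)]
  · calc (#(univ.image f) : ℝ) ^ 3 ≤ 16 * lambda1 G ^ 2 * Fintype.card V :=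
          hf.cube_le_lambda1_sq hk fun _ ht => hf.exists_eq_of_lt_card_image ht
      _ ≤ (4 * (lambda1 G + 2)) ^ 2 * Fintype.card V := by gcongr; nlinarith

variable (G) in
theorem grundyNumber_cube_le [Fintype V] :
    (grundyNumber G : ℝ) ^ 3 ≤ (4 * (lambda1 G + 2)) ^ 2 * Fintype.card V := by
  classical
  rw [grundyNumber]
  obtain ⟨σ, -, hσ⟩ := exists_mem_eq_sup (univ : Finset (Fin (Fintype.card V) ≃ V))
    ⟨(Fintype.equivFin V).symm, mem_univ _⟩ fun σ => #(univ.image (greedyColor (G.comap σ)))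
  have := ((isGreedyLabeling_greedyColor (G.comap σ)).comp_equiv σ).card_image_cube_le
  rw [← image_image, image_univ_equiv] at this
  rw [hσ]
  convert this

end SimpleGraph

theorem grundy_le_lambda1_card_bound_general {V : Type} [Fintype V]
    (G : SimpleGraph V) :
    (grundyNumber G : ℝ) ≤
      (4 * (lambda1 G + 2)) ^ ((2 : ℝ) / 3) *
        (Fintype.card V : ℝ) ^ ((1 : ℝ) / 3) :=
  Real.le_rpow_two_thirds_mul_rpow_one_third (by linarith [G.lambda1_nonneg]) (by positivity)
    G.grundyNumber_cube_le

/-- For every graph `G` on `n ≥ 1` vertices, the Grundy number satisfies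
`Γ(G) ≤ (4 (λ₁(G) + 2))^(2/3) · n^(1/3)`; in particular
`Γ(G) = O(λ₁(G) (n / λ₁(G))^(1/3))`. -/
theorem grundy_le_lambda1_card_bound {V : Type} [Fintype V] [Nonempty V]
    (G : SimpleGraph V) :
    (grundyNumber G : ℝ) ≤
      (4 * (lambda1 G + 2)) ^ ((2 : ℝ) / 3) *
        (Fintype.card V : ℝ) ^ ((1 : ℝ) / 3) :=
  grundy_le_lambda1_card_bound_general G
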